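/- Let Ψ be strictly decreasing and nonnegative on I = (a,b) and f be Ψ-concave on I. If D⁺_Ψ f(x) ≥ 0 for all x ∈ I, then f is decreasing on I. If D⁺_Ψ f(x) ≤ 0 for all x ∈ I, then f is increasing on I. -/

import Mathlib

/-!
Ψ-concavity says that the Ψ-slope `S(x, y) = (f x - f y) / (Ψ x - Ψ y)` increases along
consecutive chords. Since `S(x, z)` is a mediant of `S(x, t)` and `S(t, z)`, the slope of chords
issued from `x` increases with the right endpoint, so `D⁺_Ψ f(x) ≤ S(x, z) ≤ D⁺_Ψ f(z)` for
`x < z`. As `Ψ x > Ψ z`, the sign of `S(x, z)` is that of `f x - f z`.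
-/

open Set Filter Topology

def PsiConcaveOn (Ψ f : ℝ → ℝ) (a b : ℝ) : Prop :=
  ∀ x y z : ℝ, x ∈ Set.Ioo a b → y ∈ Set.Ioo a b → z ∈ Set.Ioo a b →
    x < y → y < z →
    (f x - f y) / (Ψ x - Ψ y) ≤ (f y - f z) / (Ψ y - Ψ z)

theorem div_le_add_div_add_of_div_le_div {K : Type*} [Field K] [LinearOrder K]
    [IsStrictOrderedRing K] {a b c d : K} (hb : 0 < b) (hd : 0 < d)
    (h : a / b ≤ c / d) : a / b ≤ (a + c) / (b + d) := by
  rw [div_le_div_iff₀ hb hd] at h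
  rw [div_le_div_iff₀ hb (add_pos hb hd)]
  nlinarith

noncomputable def psiSlope (Ψ f : ℝ → ℝ) (x y : ℝ) : ℝ :=
  (f x - f y) / (Ψ x - Ψ y)

theorem psiSlope_comm (Ψ f : ℝ → ℝ) (x y : ℝ) : psiSlope Ψ f x y = psiSlope Ψ f y x := by
  rw [psiSlope, psiSlope, ← neg_div_neg_eq, neg_sub, neg_sub]

namespace PsiConcaveOn

variable {Ψ f : ℝ → ℝ} {a b : ℝ}

theorem psiSlope_le_psiSlope_right (hΨ : StrictAntiOn Ψ (Ioo a b)) (hf : PsiConcaveOn Ψ f a b)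
    {x t z : ℝ} (hx : x ∈ Ioo a b) (ht : t ∈ Ioo a b) (hz : z ∈ Ioo a b)
    (hxt : x < t) (htz : t < z) : psiSlope Ψ f x t ≤ psiSlope Ψ f x z := by
  have hsplit : psiSlope Ψ f x z = ((f x - f t) + (f t - f z)) / ((Ψ x - Ψ t) + (Ψ t - Ψ z)) := by
    simp only [psiSlope, sub_add_sub_cancel]
  rw [hsplit]
  exact div_le_add_div_add_of_div_le_div (sub_pos.2 (hΨ hx ht hxt)) (sub_pos.2 (hΨ ht hz htz))
    (hf x t z hx ht hz hxt htz)

variable {Dp : ℝ → ℝ}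
  (hDp : ∀ y ∈ Ioo a b, Tendsto (psiSlope Ψ f · y) (𝓝[Ioo y b] y) (𝓝 (Dp y)))
include hDp

theorem le_psiSlope (hΨ : StrictAntiOn Ψ (Ioo a b)) (hf : PsiConcaveOn Ψ f a b)
    {x z : ℝ} (hx : x ∈ Ioo a b) (hz : z ∈ Ioo a b) (hxz : x < z) :
    Dp x ≤ psiSlope Ψ f x z := by
  have : (𝓝[Ioo x b] x).NeBot := by
    rw [nhdsWithin_Ioo_eq_nhdsGT hx.2]
    infer_instance
  refine le_of_tendsto (hDp x hx) ?_
  filter_upwards [self_mem_nhdsWithin, mem_nhdsWithin_of_mem_nhds (Iio_mem_nhds hxz)]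
    with t ht htz
  rw [psiSlope_comm]
  exact hf.psiSlope_le_psiSlope_right hΨ hx ⟨hx.1.trans ht.1, ht.2⟩ hz ht.1 htz

theorem psiSlope_le (hf : PsiConcaveOn Ψ f a b)
    {x z : ℝ} (hx : x ∈ Ioo a b) (hz : z ∈ Ioo a b) (hxz : x < z) :
    psiSlope Ψ f x z ≤ Dp z := by
  have : (𝓝[Ioo z b] z).NeBot := by
    rw [nhdsWithin_Ioo_eq_nhdsGT hz.2]
    infer_instance
  refine ge_of_tendsto (hDp z hz) ?_
  filter_upwards [self_mem_nhdsWithin] with w hw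
  rw [psiSlope_comm Ψ f w z]
  exact hf x z w hx hz ⟨hz.1.trans hw.1, hw.2⟩ hxz hw.1

end PsiConcaveOn

theorem stmt_5_general (a b : ℝ) (Ψ f Dp : ℝ → ℝ)
    (hΨanti : StrictAntiOn Ψ (Set.Ioo a b))
    (hf : PsiConcaveOn Ψ f a b)
    (hDp : ∀ y ∈ Set.Ioo a b,
      Tendsto (fun x => (f x - f y) / (Ψ x - Ψ y)) (𝓝[Set.Ioo y b] y) (𝓝 (Dp y))) :
    ((∀ x ∈ Set.Ioo a b, 0 ≤ Dp x) → AntitoneOn f (Set.Ioo a b)) ∧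
    ((∀ x ∈ Set.Ioo a b, Dp x ≤ 0) → MonotoneOn f (Set.Ioo a b)) := by
  refine ⟨fun hpos x hx z hz hxz => ?_, fun hneg x hx z hz hxz => ?_⟩ <;>
    obtain rfl | hxz := hxz.eq_or_lt
  · rfl
  · have := (hpos x hx).trans (hf.le_psiSlope hDp hΨanti hx hz hxz)
    rwa [psiSlope, le_div_iff₀ (sub_pos.2 (hΨanti hx hz hxz)), zero_mul, sub_nonneg] at this
  · rfl
  · have := (hf.psiSlope_le hDp hx hz hxz).trans (hneg z hz)
    rwa [psiSlope, div_le_iff₀ (sub_pos.2 (hΨanti hx hz hxz)), zero_mul, sub_nonpos] at this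

theorem stmt_5 (a b : ℝ) (Ψ f Dp : ℝ → ℝ)
    (hΨanti : StrictAntiOn Ψ (Set.Ioo a b))
    (hΨpos : ∀ x ∈ Set.Ioo a b, 0 ≤ Ψ x)
    (hf : PsiConcaveOn Ψ f a b)
    (hDp : ∀ y ∈ Set.Ioo a b,
      Tendsto (fun x => (f x - f y) / (Ψ x - Ψ y)) (𝓝[Set.Ioo y b] y) (𝓝 (Dp y))) :
    ((∀ x ∈ Set.Ioo a b, 0 ≤ Dp x) → AntitoneOn f (Set.Ioo a b)) ∧
    ((∀ x ∈ Set.Ioo a b, Dp x ≤ 0) → MonotoneOn f (Set.Ioo a b)) :=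
  stmt_5_general a b Ψ f Dp hΨanti hf hDp
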